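/- arXiv:2006.14277 — 3 statements merged into one kernel-verified Lean document; each statement's English description precedes it below -/
import Mathlib

section
/- The series ∑_{n=0}^∞ ∑_{k=0}^n [C(n,k)·p^k·(1-p)^{n-k}]^2 diverges for every p ∈ (0,1). -/
/-!
The binomial weights of row `n` sum to `1`, so by Cauchy–Schwarz the sum of their squares is at
least `1 / (n + 1)`, and the series dominates the harmonic series.
-/

open Finset Filter

theorem sum_range_choose_mul_pow_mul_one_sub_pow (p : ℝ) (n : ℕ) :
    ∑ k ∈ range (n + 1), (n.choose k : ℝ) * p ^ k * (1 - p) ^ (n - k) = 1 := by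
  calc ∑ k ∈ range (n + 1), (n.choose k : ℝ) * p ^ k * (1 - p) ^ (n - k)
      = (p + (1 - p)) ^ n := by rw [add_pow]; exact sum_congr rfl fun k _ ↦ by ring
    _ = 1 := by rw [add_sub_cancel, one_pow]

theorem one_div_succ_le_sum_sq_choose_mul_pow_mul_one_sub_pow (p : ℝ) (n : ℕ) :
    1 / ((n : ℝ) + 1) ≤
      ∑ k ∈ range (n + 1), ((n.choose k : ℝ) * p ^ k * (1 - p) ^ (n - k)) ^ 2 := by
  have hcs := sq_sum_le_card_mul_sum_sq (s := range (n + 1))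
    (f := fun k ↦ (n.choose k : ℝ) * p ^ k * (1 - p) ^ (n - k))
  rw [sum_range_choose_mul_pow_mul_one_sub_pow, card_range, one_pow] at hcs
  push_cast at hcs
  rw [div_le_iff₀ (by positivity)]
  linarith

theorem stmt_3_general (p : ℝ) :
    Tendsto (fun N => ∑ n ∈ Finset.range N, ∑ k ∈ Finset.range (n + 1),
      ((n.choose k : ℝ) * p ^ k * (1 - p) ^ (n - k)) ^ 2) atTop atTop :=
  tendsto_atTop_mono
    (fun _ ↦ sum_le_sum fun n _ ↦ one_div_succ_le_sum_sq_choose_mul_pow_mul_one_sub_pow p n)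
    Real.tendsto_sum_range_one_div_nat_succ_atTop

theorem stmt_3 (p : ℝ) (hp : 0 < p) (hp1 : p < 1) :
    Tendsto (fun N => ∑ n ∈ Finset.range N, ∑ k ∈ Finset.range (n + 1),
      ((n.choose k : ℝ) * p ^ k * (1 - p) ^ (n - k)) ^ 2) atTop atTop :=
  stmt_3_general p
end

section
/- The series ∑_{n=0}^∞ (1/8^n) ∑_{k=0}^n C(n,k)^3 diverges. -/
open Finset Filter

/-- Sum of squares of binomial coefficients equals the central binomial coefficient. -/
lemma my_sum_choose_sq (n : ℕ) :
    ∑ k ∈ Finset.range (n + 1), (n.choose k) ^ 2 = (2 * n).choose n := by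
  rw [two_mul, Nat.add_choose_eq, Finset.Nat.sum_antidiagonal_eq_sum_range_succ_mk]
  refine Finset.sum_congr rfl fun k hk => ?_
  have hk' : k ≤ n := Finset.mem_range_succ_iff.mp hk
  rw [Nat.choose_symm hk', sq]

/-- Lower bound on the square of the central binomial coefficient. -/
lemma my_centralBinom_sq (n : ℕ) (hn : 1 ≤ n) :
    (16 : ℝ) ^ n ≤ 4 * n * ((Nat.centralBinom n : ℝ)) ^ 2 := by
  induction n with
  | zero => omega
  | succ m ih =>
    rcases Nat.lt_or_ge m 1 with h | hm
    · obtain rfl : m = 0 := by omega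
      norm_num [Nat.centralBinom]
    · have ihm := ih hm
      have key : ((m : ℝ) + 1) * (Nat.centralBinom (m + 1) : ℝ)
          = 2 * (2 * (m : ℝ) + 1) * (Nat.centralBinom m : ℝ) := by
        exact_mod_cast congrArg (Nat.cast : ℕ → ℝ) (Nat.succ_mul_centralBinom_succ m)
      have hmpos : (0 : ℝ) < m := by exact_mod_cast hm
      have hc : (0 : ℝ) ≤ (Nat.centralBinom m : ℝ) := Nat.cast_nonneg _
      have hpos : (0 : ℝ) < (m : ℝ) + 1 := by positivity
      have key2 : (((m : ℝ) + 1) * (Nat.centralBinom (m + 1) : ℝ)) ^ 2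
          = (2 * (2 * (m : ℝ) + 1) * (Nat.centralBinom m : ℝ)) ^ 2 := by rw [key]
      have big : ((m : ℝ) + 1) * (16 : ℝ) ^ (m + 1)
          ≤ ((m : ℝ) + 1) * (4 * ((m : ℝ) + 1) * (Nat.centralBinom (m + 1) : ℝ) ^ 2) := by
        rw [pow_succ]
        nlinarith [key2, mul_le_mul_of_nonneg_left ihm hpos.le, sq_nonneg ((Nat.centralBinom m : ℝ))]
      have := le_of_mul_le_mul_left big hpos
      push_cast
      linarith [this]

/-- Pointwise lower bound for the terms of the series. -/
lemma my_term_lower (n : ℕ) :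
    (1 : ℝ) / 4 * (1 / (n + 1)) ≤
      (1 / (8 : ℝ) ^ n) * ∑ k ∈ Finset.range (n + 1), (n.choose k : ℝ) ^ 3 := by
  rcases Nat.eq_zero_or_pos n with h | h
  · subst h; norm_num
  -- Cauchy–Schwarz : (∑ C^2)^2 ≤ (∑ C)(∑ C^3)
  have cs : (∑ k ∈ Finset.range (n + 1), (n.choose k : ℝ) ^ 2) ^ 2 ≤
      (∑ k ∈ Finset.range (n + 1), (n.choose k : ℝ)) *
        ∑ k ∈ Finset.range (n + 1), (n.choose k : ℝ) ^ 3 :=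
    Finset.sum_sq_le_sum_mul_sum_of_sq_eq_mul _
      (fun i _ => Nat.cast_nonneg _) (fun i _ => by positivity)
      (fun i _ => by ring)
  have hsum2 : (∑ k ∈ Finset.range (n + 1), (n.choose k : ℝ) ^ 2)
      = (Nat.centralBinom n : ℝ) := by
    rw [Nat.centralBinom_eq_two_mul_choose]
    exact_mod_cast congrArg (Nat.cast : ℕ → ℝ) (my_sum_choose_sq n)
  have hsum1 : (∑ k ∈ Finset.range (n + 1), (n.choose k : ℝ)) = 2 ^ n := by
    exact_mod_cast congrArg (Nat.cast : ℕ → ℝ) (Nat.sum_range_choose n)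
  have hcb := my_centralBinom_sq n h
  rw [hsum2, hsum1] at cs
  have h2 : (0 : ℝ) < 2 ^ n := by positivity
  have h8 : (0 : ℝ) < 8 ^ n := by positivity
  have hnn : (0 : ℝ) < n := by exact_mod_cast h
  -- ∑ C^3 ≥ cb^2 / 2^n ≥ 16^n/(4n·2^n) = 8^n/(4n)
  have h1 : (8 : ℝ) ^ n / (4 * n) ≤ ∑ k ∈ Finset.range (n + 1), (n.choose k : ℝ) ^ 3 := by
    rw [div_le_iff₀ (by positivity)]
    have h16 : (16 : ℝ) ^ n = 8 ^ n * 2 ^ n := by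
      rw [← mul_pow]; norm_num
    nlinarith [cs, hcb]
  have heq : (1 / (8 : ℝ) ^ n) * (8 ^ n / (4 * n)) = 1 / (4 * n) := by
    field_simp
  have hstep : (1 : ℝ) / 4 * (1 / (n + 1)) ≤ (1 / (8 : ℝ) ^ n) * (8 ^ n / (4 * n)) := by
    rw [heq, div_mul_div_comm, one_mul]
    apply one_div_le_one_div_of_le (by positivity)
    nlinarith
  calc (1 : ℝ) / 4 * (1 / (n + 1)) ≤ (1 / (8 : ℝ) ^ n) * (8 ^ n / (4 * n)) := hstep
    _ ≤ _ := mul_le_mul_of_nonneg_left h1 (by positivity)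

theorem stmt_12 :
    Tendsto (fun N => ∑ n ∈ Finset.range N,
      (1 / (8 : ℝ) ^ n) * ∑ k ∈ Finset.range (n + 1), (n.choose k : ℝ) ^ 3)
      atTop atTop := by
  have hlow : Tendsto (fun N => ∑ n ∈ Finset.range N,
      (1 : ℝ) / 4 * (1 / (n + 1))) atTop atTop := by
    simp_rw [← Finset.mul_sum]
    exact (Real.tendsto_sum_range_one_div_nat_succ_atTop).const_mul_atTop (by norm_num)
  refine tendsto_atTop_mono (fun N => ?_) hlow
  exact Finset.sum_le_sum fun n _ => my_term_lower n
end

section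
/- There exists R > 0 such that for all r ≥ R, −(3/4)·ln ln(e + r²) + (1/4)·ln ln(e + r² + 1) + (1/4)·ln ln(e + r² + 1 − √3·r) + (1/4)·ln ln(e + r² + 1 + √3·r) < 0. -/
open Real

set_option maxHeartbeats 1000000 in
theorem stmt_18 :
    ∃ R : ℝ, 0 < R ∧ ∀ r : ℝ, R ≤ r →
      -(3 / 4) * Real.log (Real.log (Real.exp 1 + r ^ 2)) +
      (1 / 4) * Real.log (Real.log (Real.exp 1 + r ^ 2 + 1)) +
      (1 / 4) * Real.log (Real.log (Real.exp 1 + r ^ 2 + 1 - Real.sqrt 3 * r)) +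
      (1 / 4) * Real.log (Real.log (Real.exp 1 + r ^ 2 + 1 + Real.sqrt 3 * r))
      < 0 := by
  refine ⟨100, by norm_num, fun r hr => ?_⟩
  have hr0 : (0:ℝ) < r := by linarith only [hr]
  have he1 : (0:ℝ) < Real.exp 1 := Real.exp_pos 1
  have he3 : Real.exp 1 ≤ 3 := by linarith only [Real.exp_one_lt_d9]
  have hs0 : (0:ℝ) ≤ Real.sqrt 3 := Real.sqrt_nonneg 3
  have hs3 : Real.sqrt 3 * Real.sqrt 3 = 3 := Real.mul_self_sqrt (by norm_num)
  have hs2 : Real.sqrt 3 ≤ 2 := by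
    linarith only [sq_nonneg (Real.sqrt 3 - 2), hs3]
  have hsr2 : Real.sqrt 3 * r ≤ 2 * r := mul_le_mul_of_nonneg_right hs2 hr0.le
  have hsr0 : 0 ≤ Real.sqrt 3 * r := mul_nonneg hs0 hr0.le
  have h100r : 100 * r ≤ r * r := mul_le_mul_of_nonneg_right hr hr0.le
  have hr2b : (10000:ℝ) ≤ r ^ 2 := by linarith only [h100r, hr]
  have hr2p : (0:ℝ) < r ^ 2 := by positivity
  have hr4 : (0:ℝ) < r ^ 4 := by positivity
  have hr4b : 10000 * r ^ 2 ≤ r ^ 4 := by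
    have := mul_le_mul_of_nonneg_right hr2b (sq_nonneg r)
    linarith only [this]
  obtain ⟨A2, hA2⟩ : ∃ t : ℝ, t = Real.exp 1 + r ^ 2 + 1 - Real.sqrt 3 * r := ⟨_, rfl⟩
  obtain ⟨A3, hA3⟩ : ∃ t : ℝ, t = Real.exp 1 + r ^ 2 + 1 + Real.sqrt 3 * r := ⟨_, rfl⟩
  obtain ⟨A1, hA1⟩ : ∃ t : ℝ, t = Real.exp 1 + r ^ 2 + 1 := ⟨_, rfl⟩
  obtain ⟨A0, hA0⟩ : ∃ t : ℝ, t = Real.exp 1 + r ^ 2 := ⟨_, rfl⟩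
  rw [← hA2, ← hA3, ← hA1, ← hA0]
  have hA0l : r ^ 2 ≤ A0 := by rw [hA0]; linarith only [he1]
  have hA0e : Real.exp 1 ≤ A0 := by rw [hA0]; linarith only [sq_nonneg r]
  have hA1e : Real.exp 1 ≤ A1 := by rw [hA1]; linarith only [sq_nonneg r]
  have hA2e : Real.exp 1 ≤ A2 := by
    rw [hA2]; linarith only [sq_nonneg (r - 1), hsr2]
  have hA3e : Real.exp 1 ≤ A3 := by rw [hA3]; linarith only [sq_nonneg r, hsr0]
  have hA2l : r ^ 2 / 2 ≤ A2 := by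
    rw [hA2]; linarith only [hsr2, h100r, he1, hr]
  have hA3l : r ^ 2 ≤ A3 := by rw [hA3]; linarith only [he1, hsr0]
  have hA3u : A3 ≤ 2 * r ^ 2 := by
    rw [hA3]; linarith only [he3, hsr2, h100r, hr]
  have hA01 : A0 ≤ A1 := by rw [hA0, hA1]; linarith only []
  have hA0p : (0:ℝ) < A0 := lt_of_lt_of_le he1 hA0e
  have hA1p : (0:ℝ) < A1 := lt_of_lt_of_le he1 hA1e
  have hA2p : (0:ℝ) < A2 := lt_of_lt_of_le he1 hA2e
  have hA3p : (0:ℝ) < A3 := lt_of_lt_of_le he1 hA3e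
  obtain ⟨L, hL⟩ : ∃ t : ℝ, t = Real.log A0 := ⟨_, rfl⟩
  obtain ⟨P1, hP1⟩ : ∃ t : ℝ, t = Real.log A1 := ⟨_, rfl⟩
  obtain ⟨P2, hP2⟩ : ∃ t : ℝ, t = Real.log A2 := ⟨_, rfl⟩
  obtain ⟨P3, hP3⟩ : ∃ t : ℝ, t = Real.log A3 := ⟨_, rfl⟩
  rw [← hL, ← hP1, ← hP2, ← hP3]
  have h1L : 1 ≤ L := by
    rw [hL]; calc (1:ℝ) = Real.log (Real.exp 1) := (Real.log_exp 1).symm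
      _ ≤ Real.log A0 := Real.log_le_log he1 hA0e
  have h1P1 : 1 ≤ P1 := by
    rw [hP1]; calc (1:ℝ) = Real.log (Real.exp 1) := (Real.log_exp 1).symm
      _ ≤ Real.log A1 := Real.log_le_log he1 hA1e
  have h1P2 : 1 ≤ P2 := by
    rw [hP2]; calc (1:ℝ) = Real.log (Real.exp 1) := (Real.log_exp 1).symm
      _ ≤ Real.log A2 := Real.log_le_log he1 hA2e
  have h1P3 : 1 ≤ P3 := by
    rw [hP3]; calc (1:ℝ) = Real.log (Real.exp 1) := (Real.log_exp 1).symm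
      _ ≤ Real.log A3 := Real.log_le_log he1 hA3e
  -- L ≤ 2 r
  have hL2r : L ≤ 2 * r := by
    have hs : Real.sqrt A0 ≤ r + 1 := by
      have h1 : A0 ≤ (r + 1) ^ 2 := by rw [hA0]; linarith only [he3, hr]
      calc Real.sqrt A0 ≤ Real.sqrt ((r + 1) ^ 2) := Real.sqrt_le_sqrt h1
        _ = r + 1 := Real.sqrt_sq (by linarith only [hr0])
    have hs0' : 0 < Real.sqrt A0 := Real.sqrt_pos.mpr hA0p
    have h := Real.log_le_sub_one_of_pos hs0'
    have hls : Real.log (Real.sqrt A0) = L / 2 := by rw [Real.log_sqrt hA0p.le, hL]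
    rw [hls] at h
    linarith only [h, hs]
  -- product identities
  have h23 : A2 * A3 = A1 ^ 2 - 3 * r ^ 2 := by
    rw [hA2, hA3, hA1]; linear_combination (-(r ^ 2)) * hs3
  have hprod : A1 * (A2 * A3) - A0 ^ 3
      = 3 * Real.exp 1 * r ^ 2 + (3 * (Real.exp 1) ^ 2 + 3 * Real.exp 1 + 1) := by
    rw [h23, hA1, hA0]; ring
  have h03 : (0:ℝ) < A0 ^ 3 := by positivity
  -- key sum bound : (P1+P2+P3-3L) * r^4 ≤ 10
  have hsum : (P1 + P2 + P3 - 3 * L) * r ^ 4 ≤ 10 := by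
    have hlog1 : P1 + P2 + P3 - 3 * L = Real.log (A1 * (A2 * A3) / A0 ^ 3) := by
      rw [Real.log_div (by positivity) (by positivity),
        Real.log_mul (ne_of_gt hA1p) (by positivity),
        Real.log_mul (ne_of_gt hA2p) (ne_of_gt hA3p), Real.log_pow]
      push_cast
      rw [hP1, hP2, hP3, hL]; ring
    have hle : Real.log (A1 * (A2 * A3) / A0 ^ 3) ≤ A1 * (A2 * A3) / A0 ^ 3 - 1 :=
      Real.log_le_sub_one_of_pos (by positivity)
    have h2 : A1 * (A2 * A3) / A0 ^ 3 - 1 ≤ 10 / r ^ 4 := by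
      rw [div_sub_one (ne_of_gt h03), div_le_div_iff₀ h03 hr4]
      have hcube : (r ^ 2) ^ 3 ≤ A0 ^ 3 := pow_le_pow_left₀ (by positivity) hA0l 3
      rw [hprod]
      have he9 : (Real.exp 1) ^ 2 ≤ 9 := by
        calc (Real.exp 1) ^ 2 ≤ 3 ^ 2 := pow_le_pow_left₀ he1.le he3 2
          _ = 9 := by norm_num
      have her2 : Real.exp 1 * r ^ 2 ≤ 3 * r ^ 2 :=
        mul_le_mul_of_nonneg_right he3 (sq_nonneg r)
      have hstep : 3 * Real.exp 1 * r ^ 2 + (3 * (Real.exp 1) ^ 2 + 3 * Real.exp 1 + 1)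
          ≤ 10 * r ^ 2 := by linarith only [he9, her2, he3, hr2b]
      have hmm := mul_le_mul_of_nonneg_right hstep hr4.le
      linarith only [hmm, hcube]
    have h3 : P1 + P2 + P3 - 3 * L ≤ 10 / r ^ 4 := by
      rw [hlog1]; exact le_trans hle h2
    exact (le_div_iff₀ hr4).mp h3
  -- y nonneg : P2 + P3 ≤ 2 L
  have hA23le : A2 * A3 ≤ A0 ^ 2 := by
    rw [h23, hA1, hA0]; linarith only [he3, hr2b]
  have hlogsum : P2 + P3 = Real.log (A2 * A3) := by
    rw [hP2, hP3, Real.log_mul (ne_of_gt hA2p) (ne_of_gt hA3p)]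
  have hy0 : P2 + P3 ≤ 2 * L := by
    have h2 : Real.log (A2 * A3) ≤ Real.log (A0 ^ 2) :=
      Real.log_le_log (by positivity) hA23le
    rw [Real.log_pow] at h2
    push_cast at h2
    rw [← hL] at h2
    rw [hlogsum]
    linarith only [h2]
  -- y upper bound : (2L - (P2+P3)) * r^2 ≤ 2
  have hAA : (0:ℝ) < A2 * A3 := mul_pos hA2p hA3p
  have hy1 : (2 * L - (P2 + P3)) * r ^ 2 ≤ 2 := by
    have hlog1 : 2 * L - (P2 + P3) = Real.log (A0 ^ 2 / (A2 * A3)) := by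
      rw [Real.log_div (by positivity) (ne_of_gt hAA),
        Real.log_mul (ne_of_gt hA2p) (ne_of_gt hA3p), Real.log_pow]
      push_cast
      rw [hP2, hP3, hL]
    have hle : Real.log (A0 ^ 2 / (A2 * A3)) ≤ A0 ^ 2 / (A2 * A3) - 1 :=
      Real.log_le_sub_one_of_pos (by positivity)
    have h2 : A0 ^ 2 / (A2 * A3) - 1 ≤ 2 / r ^ 2 := by
      rw [div_sub_one (ne_of_gt hAA), div_le_div_iff₀ hAA hr2p]
      have hprod2 : r ^ 2 / 2 * (r ^ 2) ≤ A2 * A3 :=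
        mul_le_mul hA2l hA3l (by positivity) (by positivity)
      have hsq : A0 ^ 2 - A2 * A3 = r ^ 2 - 2 * Real.exp 1 - 1 := by
        rw [h23, hA1, hA0]; ring
      have her : 0 ≤ Real.exp 1 * r ^ 2 := by positivity
      rw [hsq]
      linarith only [hprod2, her, sq_nonneg r]
    have h3 : 2 * L - (P2 + P3) ≤ 2 / r ^ 2 := by rw [hlog1]; exact le_trans hle h2
    exact (le_div_iff₀ hr2p).mp h3
  -- spread lower bound : 3 ≤ (P3 - P2)^2 * r^2
  have hDsq : 3 ≤ (P3 - P2) ^ 2 * r ^ 2 := by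
    have e1 : P2 - P3 ≤ A2 / A3 - 1 := by
      have h := Real.log_le_sub_one_of_pos (show (0:ℝ) < A2 / A3 by positivity)
      rwa [Real.log_div (ne_of_gt hA2p) (ne_of_gt hA3p), ← hP2, ← hP3] at h
    have e3 : Real.sqrt 3 / r ≤ 1 - A2 / A3 := by
      have hq : 1 - A2 / A3 = 2 * Real.sqrt 3 * r / A3 := by
        field_simp
        rw [hA2, hA3]; ring
      rw [hq, div_le_div_iff₀ hr0 hA3p]
      have := mul_le_mul_of_nonneg_left hA3u hs0
      linarith only [this]
    have hdr : Real.sqrt 3 ≤ (P3 - P2) * r := by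
      have h4 : Real.sqrt 3 / r ≤ P3 - P2 := by linarith only [e1, e3]
      rw [div_le_iff₀ hr0] at h4; exact h4
    have hm := mul_le_mul hdr hdr hs0 (le_trans hs0 hdr)
    linarith only [hm, hs3]
  -- abbreviations
  obtain ⟨x, hxe⟩ : ∃ x, P1 = L + x := ⟨P1 - L, by ring⟩
  obtain ⟨y, hye⟩ : ∃ y, (P2 + P3) / 2 = L - y := ⟨L - (P2 + P3) / 2, by ring⟩
  obtain ⟨d, hde⟩ : ∃ d, (P3 - P2) / 2 = d := ⟨(P3 - P2) / 2, rfl⟩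
  have hP2e : P2 = (L - y) - d := by
    have h1 := hye; have h2 := hde; linarith only [h1, h2]
  have hP3e : P3 = (L - y) + d := by
    have h1 := hye; have h2 := hde; linarith only [h1, h2]
  have hx0 : 0 ≤ x := by
    have h1 : L ≤ P1 := by rw [hL, hP1]; exact Real.log_le_log hA0p hA01
    rw [hxe] at h1; linarith only [h1]
  have hy0' : 0 ≤ y := by
    rw [hP2e, hP3e] at hy0; linarith only [hy0]
  have hyr : y * r ^ 2 ≤ 1 := by
    rw [hP2e, hP3e] at hy1; linarith only [hy1]
  have hsum' : (x - 2 * y) * r ^ 4 ≤ 10 := by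
    rw [hxe, hP2e, hP3e] at hsum; linarith only [hsum]
  have hd2 : 3 / 4 ≤ d ^ 2 * r ^ 2 := by
    rw [hP2e, hP3e] at hDsq; linarith only [hDsq]
  have hM1 : 1 ≤ L - y := by
    have h1 : 1 ≤ (P2 + P3) / 2 := by linarith only [h1P2, h1P3]
    rwa [hye] at h1
  have hyr4 : y * r ^ 4 ≤ r ^ 2 := by
    have := mul_le_mul_of_nonneg_right hyr (sq_nonneg r)
    linarith only [this]
  -- x ≤ 1
  have hx1 : x ≤ 1 := by
    by_contra hcon
    push_neg at hcon
    have h1 := mul_lt_mul_of_pos_right hcon hr4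
    linarith only [h1, hsum', hyr4, hr2b, hr4b]
  -- key cubic inequality
  have key : P1 * P2 * P3 < L ^ 3 := by
    rw [hxe, hP2e, hP3e]
    have b1 : (x - 2 * y) * L * r ^ 4 ≤ 20 * r := by
      have h1 := mul_le_mul_of_nonneg_right hsum' (le_trans zero_le_one h1L)
      linarith only [h1, hL2r]
    have b2 : y ^ 2 * r ^ 4 ≤ 1 := by
      have := mul_le_mul hyr hyr (mul_nonneg hy0' (sq_nonneg r)) zero_le_one
      linarith only [this]
    have b3 : (3 / 4) * r ^ 2 ≤ d ^ 2 * r ^ 4 := by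
      have := mul_le_mul_of_nonneg_right hd2 (sq_nonneg r)
      linarith only [this]
    have hB : ((x - 2 * y) * L + y ^ 2 - d ^ 2) * r ^ 4 ≤ -(r ^ 2 / 8) := by
      linarith only [b1, b2, b3, h100r, hr]
    have hB0 : ((x - 2 * y) * L + y ^ 2 - d ^ 2) * r ^ 4 ≤ 0 := by
      linarith only [hB, hr2p]
    have hLB4 : L * (((x - 2 * y) * L + y ^ 2 - d ^ 2) * r ^ 4) ≤ -(r ^ 2 / 8) := by
      have h1 := mul_le_mul_of_nonpos_right h1L hB0
      linarith only [h1, hB]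
    have hxy4 : x * (y ^ 2 * r ^ 4) ≤ 1 := by
      have := mul_le_mul hx1 b2 (mul_nonneg (sq_nonneg y) hr4.le) zero_le_one
      linarith only [this]
    have hL0 : 0 ≤ L := le_trans zero_le_one h1L
    have hpos1 : 0 ≤ 2 * x * L * y * r ^ 4 :=
      mul_nonneg (mul_nonneg (mul_nonneg (mul_nonneg (by norm_num) hx0) hL0) hy0') hr4.le
    have hpos2 : 0 ≤ x * d ^ 2 * r ^ 4 :=
      mul_nonneg (mul_nonneg hx0 (sq_nonneg d)) hr4.le
    have hfinal : ((L + x) * ((L - y - d) * (L - y + d)) - L ^ 3) * r ^ 4 < 0 := by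
      have hident : ((L + x) * ((L - y - d) * (L - y + d)) - L ^ 3) * r ^ 4
          = L * (((x - 2 * y) * L + y ^ 2 - d ^ 2) * r ^ 4)
            - 2 * x * L * y * r ^ 4 + x * (y ^ 2 * r ^ 4) - x * d ^ 2 * r ^ 4 := by
        ring
      rw [hident]
      linarith only [hLB4, hxy4, hpos1, hpos2, hr2b]
    by_contra hcon
    push_neg at hcon
    have : 0 ≤ ((L + x) * ((L - y - d) * (L - y + d)) - L ^ 3) * r ^ 4 := by
      apply mul_nonneg _ hr4.le
      linarith only [hcon]
    linarith only [this, hfinal]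
  -- conclude
  have hP1p : (0:ℝ) < P1 := lt_of_lt_of_le one_pos h1P1
  have hP2p : (0:ℝ) < P2 := lt_of_lt_of_le one_pos h1P2
  have hP3p : (0:ℝ) < P3 := lt_of_lt_of_le one_pos h1P3
  have hposP : (0:ℝ) < P1 * P2 * P3 := mul_pos (mul_pos hP1p hP2p) hP3p
  have hlt : Real.log (P1 * P2 * P3) < Real.log (L ^ 3) := Real.log_lt_log hposP key
  rw [Real.log_mul (ne_of_gt (mul_pos hP1p hP2p)) (ne_of_gt hP3p),
    Real.log_mul (ne_of_gt hP1p) (ne_of_gt hP2p), Real.log_pow] at hlt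
  push_cast at hlt
  linarith only [hlt]
end
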